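/- Let Γ be a weighted graph admitting a lattice embedding F into ℤ^N. Suppose that for some coordinate index i there are exactly three vertices A, B, C whose images under F have nonzero i-th coordinate, that B and C are adjacent, that the i-th coordinates of F(B) and F(C) are 1 and −1 in some order, and that the i-th coordinate of F(A) is d ≠ 0. Let Γ' be the weighted graph obtained from Γ by deleting the edge BC, adding one new vertex D of weight −2 adjacent exactly to B and C, and decreasing the weight of A by d². Then Γ' admits a lattice embedding into ℤ^{N+1}. (IGOCL operations preserve lattice embeddability.) -/

import Mathlib

/-- The standard negative definite bilinear form on `ℤ^N`. -/
def negForm {N : ℕ} (x y : Fin N → ℤ) : ℤ := -∑ i, x i * y i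

/-- A lattice embedding of a weighted graph `(G, w)` into `ℤ^N` with its negative
definite form. -/
def IsLatticeEmbedding {V : Type*} (G : SimpleGraph V) (w : V → ℤ) {N : ℕ}
    (F : V → Fin N → ℤ) : Prop :=
  (∀ v, negForm (F v) (F v) = w v) ∧
  (∀ u v, G.Adj u v → negForm (F u) (F v) = 1) ∧
  (∀ u v, u ≠ v → ¬G.Adj u v → negForm (F u) (F v) = 0)

/-- The graph obtained from `G` by deleting the edge `BC` and adding one new vertex
adjacent exactly to `B` and `C`. -/
def igoclGraph {V : Type*} [DecidableEq V] (G : SimpleGraph V) (B C : V) :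
    SimpleGraph (V ⊕ Unit) :=
  SimpleGraph.fromRel (fun x y =>
    match x, y with
    | .inl u, .inl v => G.Adj u v ∧ ¬(u = B ∧ v = C) ∧ ¬(u = C ∧ v = B)
    | .inl u, .inr _ => u = B ∨ u = C
    | .inr _, _ => False)

/-!
Only coordinate `i` and one new coordinate change. Writing `x_v = F v i` and `s = x_B = -x_C`,
the pair (coordinate `i`, new coordinate) becomes `(x_A, -x_A)` at `A`, `(s, 0)` at `B`, `(0, s)`
at `C` and `(-s, -s)` at the new vertex, and stays zero elsewhere. This lowers the square of `A`
by `x_A²`, turns the pairing of `B` and `C` from `1` into `0`, leaves all other pairings of old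
vertices unchanged, and gives the new vertex square `-2` and pairing `1` with exactly `B` and `C`.
-/

@[simp]
theorem negForm_zero_left {N : ℕ} (a : Fin N → ℤ) : negForm 0 a = 0 := by
  simp [negForm]

@[simp]
theorem negForm_zero_right {N : ℕ} (a : Fin N → ℤ) : negForm a 0 = 0 := by
  simp [negForm]

theorem negForm_snoc_snoc {N : ℕ} (a b : Fin N → ℤ) (x y : ℤ) :
    negForm (Fin.snoc a x) (Fin.snoc b y) = negForm a b - x * y := by
  simp [negForm, Fin.sum_univ_castSucc]; ring

theorem negForm_update_update {N : ℕ} (a b : Fin N → ℤ) (i : Fin N) (x y : ℤ) :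
    negForm (Function.update a i x) (Function.update b i y) = negForm a b + a i * b i - x * y := by
  have h : (fun j => Function.update a i x j * Function.update b i y j)
      = Function.update (a * b) i (x * y) := by rw [Function.update_mul]; rfl
  simp only [negForm, h, Finset.sum_update_of_mem (Finset.mem_univ i),
    Finset.sum_eq_add_sum_sdiff_singleton_of_mem (Finset.mem_univ i) (fun j => a j * b j),
    Pi.mul_apply]
  ring

theorem isLatticeEmbedding_iff_negForm_eq {V : Type*} [DecidableEq V] (G : SimpleGraph V)
    [DecidableRel G.Adj] (w : V → ℤ) {N : ℕ} (F : V → Fin N → ℤ) :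
    IsLatticeEmbedding G w F ↔
      ∀ u v, negForm (F u) (F v) = if u = v then w u else if G.Adj u v then 1 else 0 := by
  refine ⟨fun ⟨hw, hadj, hnadj⟩ u v => ?_,
    fun h => ⟨fun v => ?_, fun u v huv => ?_, fun u v huv hn => ?_⟩⟩
  · split_ifs with huv hG
    · exact huv ▸ hw u
    · exact hadj u v hG
    · exact hnadj u v huv hG
  · simpa using h v v
  · simpa [huv.ne, huv] using h u v
  · simpa [huv, hn] using h u v

section igoclGraph

variable {V : Type*} [DecidableEq V] (G : SimpleGraph V) (B C : V)

@[simp]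
theorem igoclGraph_adj_inl_inl (u v : V) : (igoclGraph G B C).Adj (.inl u) (.inl v) ↔
    G.Adj u v ∧ ¬(u = B ∧ v = C) ∧ ¬(u = C ∧ v = B) := by
  simp only [igoclGraph, SimpleGraph.fromRel_adj, ne_eq, Sum.inl.injEq, G.adj_comm v u]
  constructor
  · rintro ⟨-, h | h⟩ <;> tauto
  · exact fun h => ⟨h.1.ne, Or.inl h⟩

@[simp]
theorem igoclGraph_adj_inl_inr (u : V) (x : Unit) :
    (igoclGraph G B C).Adj (.inl u) (.inr x) ↔ u = B ∨ u = C := by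
  simp [igoclGraph]

@[simp]
theorem igoclGraph_adj_inr_inl (x : Unit) (u : V) :
    (igoclGraph G B C).Adj (.inr x) (.inl u) ↔ u = B ∨ u = C := by
  simp [igoclGraph]

end igoclGraph

def igoclEmbedding {V : Type*} [DecidableEq V] {N : ℕ} (F : V → Fin N → ℤ) (i : Fin N)
    (A C : V) : V ⊕ Unit → Fin (N + 1) → ℤ :=
  Sum.elim
    (fun v => Fin.snoc (Function.update (F v) i (if v = C then 0 else F v i))
      (if v = A ∨ v = C then -F v i else 0))
    fun _ => Fin.snoc (Function.update 0 i (F C i)) (F C i)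

theorem isLatticeEmbedding_igoclEmbedding {V : Type*} [DecidableEq V] {G : SimpleGraph V}
    {w : V → ℤ} {N : ℕ} {F : V → Fin N → ℤ} (hF : IsLatticeEmbedding G w F) {i : Fin N}
    {A B C : V} (hAB : A ≠ B) (hAC : A ≠ C) (hBC : B ≠ C) (hadj : G.Adj B C)
    (honly : ∀ v, F v i ≠ 0 → v = A ∨ v = B ∨ v = C) {s : ℤ} (hs : s * s = 1)
    (hB : F B i = s) (hC : F C i = -s) :
    IsLatticeEmbedding (igoclGraph G B C)
      (Sum.elim (fun v => if v = A then w v - F A i ^ 2 else w v) fun _ => -2)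
      (igoclEmbedding F i A C) := by
  classical
  have hcases : ∀ v, v = A ∨ v = B ∨ v = C ∨ v ≠ A ∧ v ≠ B ∧ v ≠ C ∧ F v i = 0 := by
    intro v
    by_cases hv : F v i = 0
    · tauto
    · exact (honly v hv).imp_right (Or.imp_right Or.inl)
  rw [isLatticeEmbedding_iff_negForm_eq] at hF ⊢
  rintro (u | u) (v | v) <;>
    simp only [igoclEmbedding, Sum.elim_inl, Sum.elim_inr, negForm_snoc_snoc, negForm_update_update]
  · rw [hF u v]
    rcases hcases u with hu | hu | hu | hu <;> rcases hcases v with hv | hv | hv | hv <;>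
      simp [hu, hv, hAB, hAC, hBC, hAB.symm, hAC.symm, hBC.symm, hadj, hadj.symm, hB, hC, hs, sq]
    -- left over: conditions `A = v` against hypotheses `v ≠ A`, which `simp` does not flip
    all_goals grind
  · rcases hcases u with hu | hu | hu | hu <;>
      simp [hu, hAB, hAC, hAB.symm, hAC.symm, hBC, hB, hC, hs]
  · rcases hcases v with hv | hv | hv | hv <;>
      simp [hv, hAB, hAC, hAB.symm, hAC.symm, hBC, hB, hC, hs]
  · simp [hC, hs]

theorem igocl_preserves_embeddability {V : Type*} [DecidableEq V]
    (G : SimpleGraph V) (w : V → ℤ) {N : ℕ} (F : V → Fin N → ℤ)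
    (hF : IsLatticeEmbedding G w F)
    (i : Fin N) (A B C : V) (hAB : A ≠ B) (hAC : A ≠ C) (hBC : B ≠ C)
    (hadj : G.Adj B C)
    (honly : ∀ v, F v i ≠ 0 → v = A ∨ v = B ∨ v = C)
    (hBCcoord : (F B i = 1 ∧ F C i = -1) ∨ (F B i = -1 ∧ F C i = 1))
    (d : ℤ) (hA : F A i = d) :
    ∃ F' : V ⊕ Unit → Fin (N + 1) → ℤ,
      IsLatticeEmbedding (igoclGraph G B C)
        (fun x => match x with
          | .inl v => if v = A then w v - d ^ 2 else w v
          | .inr _ => -2) F' := by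
  obtain ⟨s, hs, hB, hC⟩ : ∃ s : ℤ, s * s = 1 ∧ F B i = s ∧ F C i = -s := by
    rcases hBCcoord with ⟨hB, hC⟩ | ⟨hB, hC⟩
    · exact ⟨1, rfl, hB, hC⟩
    · exact ⟨-1, rfl, hB, by rw [hC]; rfl⟩
  subst hA
  refine ⟨igoclEmbedding F i A C, ?_⟩
  convert isLatticeEmbedding_igoclEmbedding hF hAB hAC hBC hadj honly hs hB hC using 2 with x
  cases x <;> rfl
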